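/- For 0 < r < 1, the Cayley transform Φ(z) = ( √2·'z/(zₙ−1), (zₙ+1)/(zₙ−1) ) maps the domain Ω = { z ∈ ℂⁿ : 2 Re zₙ + r|'z|² < 0 } bijectively onto the bounded domain { z ∈ ℂⁿ : r|'z|² + |zₙ|² < 1 }. -/

import Mathlib

/-!
Away from the hyperplane `zₙ = 1`, which neither domain meets, `Φ` is an involution. By
`|w + 1|² - |w - 1|² = 4 Re w` and `Re ((w + 1) / (w - 1)) = (|w|² - 1) / |w - 1|²`, each
defining function composed with `Φ` is the other one times the positive factor `2 / |zₙ - 1|²`,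
so `Φ` maps each domain into the other.
-/

open Real Set

theorem Complex.norm_add_one_sq_sub_norm_sub_one_sq (w : ℂ) :
    ‖w + 1‖ ^ 2 - ‖w - 1‖ ^ 2 = 4 * w.re := by
  simp only [Complex.sq_norm, Complex.normSq_apply, Complex.add_re, Complex.sub_re,
    Complex.add_im, Complex.sub_im, Complex.one_re, Complex.one_im]
  ring

theorem Complex.re_add_one_div_sub_one (w : ℂ) :
    ((w + 1) / (w - 1)).re = (‖w‖ ^ 2 - 1) / ‖w - 1‖ ^ 2 := by
  simp only [Complex.div_re, Complex.sq_norm, Complex.normSq_apply, Complex.add_re,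
    Complex.sub_re, Complex.add_im, Complex.sub_im, Complex.one_re, Complex.one_im]
  ring

namespace Cayley

variable {ι : Type*}

noncomputable def cayley (z : (ι → ℂ) × ℂ) : (ι → ℂ) × ℂ :=
  (fun i => (√2 : ℂ) * z.1 i / (z.2 - 1), (z.2 + 1) / (z.2 - 1))

theorem cayley_cayley {z : (ι → ℂ) × ℂ} (hz : z.2 ≠ 1) : cayley (cayley z) = z := by
  have hd : z.2 - 1 ≠ 0 := sub_ne_zero.mpr hz
  have hsqrt : (√2 : ℂ) ^ 2 = 2 := by
    rw [← Complex.ofReal_pow, sq_sqrt zero_le_two, Complex.ofReal_ofNat]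
  have hden : (z.2 + 1) / (z.2 - 1) - 1 = 2 / (z.2 - 1) := by
    field_simp
    ring
  ext i
  · simp only [cayley, hden]
    field_simp
    rw [hsqrt, mul_comm]
  · simp only [cayley, hden]
    field_simp
    ring

variable [Fintype ι]

def siegelDomain (r : ℝ) : Set ((ι → ℂ) × ℂ) :=
  {z | 2 * z.2.re + r * ∑ i, ‖z.1 i‖ ^ 2 < 0}

def ellipsoid (r : ℝ) : Set ((ι → ℂ) × ℂ) :=
  {z | r * ∑ i, ‖z.1 i‖ ^ 2 + ‖z.2‖ ^ 2 < 1}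

theorem sum_norm_sq_cayley_fst (z : (ι → ℂ) × ℂ) :
    ∑ i, ‖(cayley z).1 i‖ ^ 2 = 2 / ‖z.2 - 1‖ ^ 2 * ∑ i, ‖z.1 i‖ ^ 2 := by
  rw [Finset.mul_sum]
  refine Finset.sum_congr rfl fun i _ => ?_
  rw [cayley, norm_div, norm_mul, Complex.norm_real, norm_of_nonneg (sqrt_nonneg 2), div_pow,
    mul_pow, sq_sqrt zero_le_two]
  ring

variable (r : ℝ)

theorem ellipsoid_defect_cayley {z : (ι → ℂ) × ℂ} (hz : z.2 ≠ 1) :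
    r * ∑ i, ‖(cayley z).1 i‖ ^ 2 + ‖(cayley z).2‖ ^ 2 - 1
      = 2 * (2 * z.2.re + r * ∑ i, ‖z.1 i‖ ^ 2) / ‖z.2 - 1‖ ^ 2 := by
  have hd : ‖z.2 - 1‖ ≠ 0 := by simpa [sub_eq_zero] using hz
  rw [sum_norm_sq_cayley_fst, cayley, norm_div, div_pow, eq_div_iff (pow_ne_zero 2 hd)]
  field_simp
  linear_combination Complex.norm_add_one_sq_sub_norm_sub_one_sq z.2

theorem siegelDomain_defect_cayley (z : (ι → ℂ) × ℂ) :
    2 * (cayley z).2.re + r * ∑ i, ‖(cayley z).1 i‖ ^ 2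
      = 2 * (r * ∑ i, ‖z.1 i‖ ^ 2 + ‖z.2‖ ^ 2 - 1) / ‖z.2 - 1‖ ^ 2 := by
  rw [sum_norm_sq_cayley_fst, cayley, Complex.re_add_one_div_sub_one]
  ring

variable {r}

theorem snd_ne_one_of_mem_siegelDomain (hr : 0 ≤ r) {z : (ι → ℂ) × ℂ}
    (hz : z ∈ siegelDomain r) : z.2 ≠ 1 := by
  rintro h
  have : 0 ≤ r * ∑ i, ‖z.1 i‖ ^ 2 := by positivity
  simp only [siegelDomain, mem_ofPred_eq, h, Complex.one_re] at hz
  linarith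

theorem snd_ne_one_of_mem_ellipsoid (hr : 0 ≤ r) {z : (ι → ℂ) × ℂ}
    (hz : z ∈ ellipsoid r) : z.2 ≠ 1 := by
  rintro h
  have : 0 ≤ r * ∑ i, ‖z.1 i‖ ^ 2 := by positivity
  simp only [ellipsoid, mem_ofPred_eq, h, norm_one] at hz
  linarith

theorem mapsTo_cayley_siegelDomain (hr : 0 ≤ r) :
    MapsTo cayley (siegelDomain (ι := ι) r) (ellipsoid r) := by
  intro z hz
  have hz1 := snd_ne_one_of_mem_siegelDomain hr hz
  have hneg : 2 * (2 * z.2.re + r * ∑ i, ‖z.1 i‖ ^ 2) / ‖z.2 - 1‖ ^ 2 < 0 :=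
    div_neg_of_neg_of_pos (by linarith [show 2 * z.2.re + r * ∑ i, ‖z.1 i‖ ^ 2 < 0 from hz])
      (pow_pos (norm_pos_iff.mpr (sub_ne_zero.mpr hz1)) 2)
  rw [← ellipsoid_defect_cayley r hz1] at hneg
  exact sub_neg.mp hneg

theorem mapsTo_cayley_ellipsoid (hr : 0 ≤ r) :
    MapsTo cayley (ellipsoid (ι := ι) r) (siegelDomain r) := by
  intro z hz
  have hz1 := snd_ne_one_of_mem_ellipsoid hr hz
  show 2 * (cayley z).2.re + r * ∑ i, ‖(cayley z).1 i‖ ^ 2 < 0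
  rw [siegelDomain_defect_cayley]
  exact div_neg_of_neg_of_pos (by linarith [show r * ∑ i, ‖z.1 i‖ ^ 2 + ‖z.2‖ ^ 2 < 1 from hz])
    (pow_pos (norm_pos_iff.mpr (sub_ne_zero.mpr hz1)) 2)

theorem bijOn_cayley (hr : 0 ≤ r) : BijOn cayley (siegelDomain (ι := ι) r) (ellipsoid r) :=
  InvOn.bijOn
    ⟨fun _ hz => cayley_cayley (snd_ne_one_of_mem_siegelDomain hr hz),
      fun _ hz => cayley_cayley (snd_ne_one_of_mem_ellipsoid hr hz)⟩
    (mapsTo_cayley_siegelDomain hr) (mapsTo_cayley_ellipsoid hr)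

end Cayley

theorem cayley_maps_Omega_general (m : ℕ) (r : ℝ) (hr0 : 0 < r)
    (Φ : (Fin m → ℂ) × ℂ → (Fin m → ℂ) × ℂ)
    (hΦ : ∀ z : (Fin m → ℂ) × ℂ,
      Φ z = (fun i => (Real.sqrt 2 : ℂ) * z.1 i / (z.2 - 1), (z.2 + 1) / (z.2 - 1))) :
    Set.BijOn Φ
      {z : (Fin m → ℂ) × ℂ | 2 * z.2.re + r * ∑ i, ‖z.1 i‖ ^ 2 < 0}
      {z : (Fin m → ℂ) × ℂ | r * ∑ i, ‖z.1 i‖ ^ 2 + ‖z.2‖ ^ 2 < 1} := by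
  obtain rfl : Φ = Cayley.cayley := funext hΦ
  exact Cayley.bijOn_cayley hr0.le

theorem cayley_maps_Omega (m : ℕ) (r : ℝ) (hr0 : 0 < r) (hr1 : r < 1)
    (Φ : (Fin m → ℂ) × ℂ → (Fin m → ℂ) × ℂ)
    (hΦ : ∀ z : (Fin m → ℂ) × ℂ,
      Φ z = (fun i => (Real.sqrt 2 : ℂ) * z.1 i / (z.2 - 1), (z.2 + 1) / (z.2 - 1))) :
    Set.BijOn Φ
      {z : (Fin m → ℂ) × ℂ | 2 * z.2.re + r * ∑ i, ‖z.1 i‖ ^ 2 < 0}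
      {z : (Fin m → ℂ) × ℂ | r * ∑ i, ‖z.1 i‖ ^ 2 + ‖z.2‖ ^ 2 < 1} :=
  cayley_maps_Omega_general m r hr0 Φ hΦ
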